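/- For every symplectic F-linear bijection A : V → V there is a unique vector b_A ∈ V such that ϑ_0(A^{-1} u) = ϑ_{b_A}(u) for all u ∈ V, and then ϑ_a(A^{-1} u) = ϑ_{A a + b_A}(u) for all a, u ∈ V. The map sending A to the affine bijection σ_A : a ↦ A a + b_A of V is an injective group homomorphism from the symplectic group into the permutation group of V; its image meets the group of translations of V only in the identity, and the image has exactly two orbits on V, namely {a ∈ V : Tr(ϑ_0(a)) = 0} and {a ∈ V : Tr(ϑ_0(a)) = 1}, of sizes (q^{2m}+q^m)/2 and (q^{2m}−q^m)/2. (This gives a complement to the translation subgroup in the affine symplectic group ASp(2m,q) distinct from the linear one, with the stated orbit lengths.) -/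

import Mathlib

open Finset

noncomputable section

/-- The symplectic bilinear form `⟨u,v⟩ = ∑_{i<m} (u_i v_{m+i} + u_{m+i} v_i)` on `F^{2m}`,
`F = GF(2^h)`. -/
def symp (h m : ℕ) (u v : Fin (2*m) → GaloisField 2 h) : GaloisField 2 h :=
  ∑ i : Fin m, (u ⟨i.1, by omega⟩ * v ⟨m + i.1, by omega⟩ +
    u ⟨m + i.1, by omega⟩ * v ⟨i.1, by omega⟩)

/-- The quadratic form `ϑ_0(u) = ∑_{i<m} u_i u_{m+i}`. -/
def th0 (h m : ℕ) (u : Fin (2*m) → GaloisField 2 h) : GaloisField 2 h :=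
  ∑ i : Fin m, u ⟨i.1, by omega⟩ * u ⟨m + i.1, by omega⟩

/-- The quadratic form `ϑ_a(u) = ϑ_0(u) + ⟨a,u⟩²`. -/
def th (h m : ℕ) (a u : Fin (2*m) → GaloisField 2 h) : GaloisField 2 h :=
  th0 h m u + (symp h m a u)^2

/-- The absolute trace `GF(2^h) → F_2`. -/
def tr (h : ℕ) (x : GaloisField 2 h) : ZMod 2 :=
  Algebra.trace (ZMod 2) (GaloisField 2 h) x

end

/-- `A` is a symplectic linear bijection. -/
def IsSymp (h m : ℕ)
    (A : (Fin (2*m) → GaloisField 2 h) ≃ₗ[GaloisField 2 h] (Fin (2*m) → GaloisField 2 h)) :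
    Prop :=
  ∀ u v, symp h m (A u) (A v) = symp h m u v

/-!
For symplectic `A`, the map `D = ϑ_0 ∘ A⁻¹ + ϑ_0` is additive (the cross terms `⟨u, v⟩` cancel)
and satisfies `D (c u) = c² D u`, so its square root is linear and, by non-degeneracy, equals
`⟨b_A, ·⟩` for a unique `b_A`; uniqueness then gives `b_{AB} = A b_B + b_A`, i.e. `A ↦ σ_A` is a
homomorphism. Counting zeros of `Tr ∘ ϑ_0` fibrewise over the first `m` coordinates gives the
two orbit sizes, which differ; as `ϑ_{b_A} = ϑ_0 ∘ A⁻¹` has as many trace zeros as `ϑ_0`, this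
forces `Tr ϑ_0(b_A) = 0`, and the level sets of `Tr ∘ ϑ_0` are `σ_A`-invariant. Transitivity on a
level set comes from transvections, whose parameter solves an Artin–Schreier equation.
-/

theorem AddMonoidHom.two_mul_card_ker_of_surjective {G : Type*} [AddGroup G] {φ : G →+ ZMod 2}
    (hφ : Function.Surjective φ) : 2 * Nat.card φ.ker = Nat.card G := by
  rw [← φ.ker.card_mul_index, AddSubgroup.index_ker, φ.range_eq_top.mpr hφ, mul_comm]
  simp

section TraceCharTwo

variable {K : Type*} [Field K] [Finite K] [Algebra (ZMod 2) K]

theorem Algebra.trace_zmod_two_sq (x : K) :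
    Algebra.trace (ZMod 2) K (x ^ 2) = Algebra.trace (ZMod 2) K x := by
  rw [← Algebra.trace_eq_of_algEquiv (FiniteField.frobeniusAlgEquivOfAlgebraic (ZMod 2) K) x,
    FiniteField.coe_frobeniusAlgEquivOfAlgebraic, ZMod.card]

/-- The Artin–Schreier map `w ↦ w² + w` has kernel `{0, 1}`, so its image has index 2; it lies in
the kernel of the trace, hence equals it. -/
theorem exists_sq_add_self_eq_of_trace_eq_zero {α : K} (hα : Algebra.trace (ZMod 2) K α = 0) :
    ∃ w : K, w ^ 2 + w = α := by
  have : CharP K 2 := charP_of_injective_algebraMap' (ZMod 2) 2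
  let P : K →+ K := AddMonoidHom.mk' (fun w => w ^ 2 + w) fun x y => by
    simp only [CharTwo.add_sq]; abel
  let T : K →+ ZMod 2 := (Algebra.trace (ZMod 2) K).toAddMonoidHom
  have hPT : P.range ≤ T.ker := by
    rintro _ ⟨w, rfl⟩
    simp [P, T, map_add, Algebra.trace_zmod_two_sq, CharTwo.add_self_eq_zero]
  have hkerP : Nat.card P.ker = 2 := by
    have hker : (P.ker : Set K) = {0, 1} := by
      ext w
      simp only [SetLike.mem_coe, AddMonoidHom.mem_ker, Set.mem_insert_iff,
        Set.mem_singleton_iff, P, AddMonoidHom.mk'_apply]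
      rw [show w ^ 2 + w = w * (w + 1) by ring, mul_eq_zero, CharTwo.add_eq_zero]
    rw [← SetLike.coe_sort_coe, Nat.card_coe_set_eq, hker, Set.ncard_pair zero_ne_one]
  have hcard : Nat.card T.ker ≤ Nat.card P.range := by
    have h1 := T.two_mul_card_ker_of_surjective (Algebra.trace_surjective (ZMod 2) K)
    have h2 := P.ker.card_mul_index
    rw [AddSubgroup.index_ker, hkerP] at h2
    omega
  have hrange : P.range = T.ker := AddSubgroup.eq_of_le_of_card_ge hPT hcard
  obtain ⟨w, hw⟩ : α ∈ P.range := hrange ▸ hα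
  exact ⟨w, hw⟩

theorem two_mul_card_trace_dotProduct_eq_zero {ι : Type*} [Fintype ι] {x : ι → K} (hx : x ≠ 0) :
    2 * Nat.card {y : ι → K // Algebra.trace (ZMod 2) K (x ⬝ᵥ y) = 0} = Nat.card (ι → K) := by
  classical
  let φ : (ι → K) →+ ZMod 2 :=
    AddMonoidHom.mk' (fun y => Algebra.trace (ZMod 2) K (x ⬝ᵥ y)) fun y y' => by
      simp only [dotProduct_add, map_add]
  have hφ : Function.Surjective φ := by
    obtain ⟨i, hi⟩ := Function.ne_iff.mp hx
    intro z
    obtain ⟨c, rfl⟩ := Algebra.trace_surjective (ZMod 2) K z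
    refine ⟨Pi.single i ((x i)⁻¹ * c), ?_⟩
    simp [φ, dotProduct_single, mul_inv_cancel_left₀ hi]
  rw [← φ.two_mul_card_ker_of_surjective hφ]
  rfl

end TraceCharTwo

lemma zmod_two_eq_one_iff_ne_zero (z : ZMod 2) : z = 1 ↔ z ≠ 0 := by
  revert z; decide

section Symplectic

variable {h m : ℕ}
local notation "F" => GaloisField 2 h
local notation "V" => Fin (2 * m) → GaloisField 2 h

lemma tr_add (x y : F) : tr h (x + y) = tr h x + tr h y := map_add _ x y

lemma tr_sq (x : F) : tr h (x ^ 2) = tr h x := Algebra.trace_zmod_two_sq x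

lemma symp_comm (u v : V) : symp h m u v = symp h m v u :=
  Finset.sum_congr rfl fun _ _ => by ring

lemma symp_self (u : V) : symp h m u u = 0 :=
  Finset.sum_eq_zero fun _ _ => by rw [mul_comm, CharTwo.add_self_eq_zero]

lemma symp_add_left (u u' v : V) : symp h m (u + u') v = symp h m u v + symp h m u' v := by
  simp only [symp, ← Finset.sum_add_distrib, Pi.add_apply]
  exact Finset.sum_congr rfl fun _ _ => by ring

lemma symp_add_right (u v v' : V) : symp h m u (v + v') = symp h m u v + symp h m u v' := by
  rw [symp_comm, symp_add_left, symp_comm v, symp_comm v']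

lemma symp_smul_left (c : F) (u v : V) : symp h m (c • u) v = c * symp h m u v := by
  simp only [symp, Finset.mul_sum, Pi.smul_apply, smul_eq_mul]
  exact Finset.sum_congr rfl fun _ _ => by ring

lemma symp_smul_right (c : F) (u v : V) : symp h m u (c • v) = c * symp h m u v := by
  rw [symp_comm, symp_smul_left, symp_comm]

lemma th0_add (u v : V) : th0 h m (u + v) = th0 h m u + th0 h m v + symp h m u v := by
  simp only [th0, symp, ← Finset.sum_add_distrib, Pi.add_apply]
  exact Finset.sum_congr rfl fun _ _ => by ring

lemma th0_smul (c : F) (u : V) : th0 h m (c • u) = c ^ 2 * th0 h m u := by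
  simp only [th0, Finset.mul_sum, Pi.smul_apply, smul_eq_mul]
  exact Finset.sum_congr rfl fun _ _ => by ring

variable (h m) in
noncomputable def halves : (Fin (2 * m) → GaloisField 2 h) ≃ₗ[GaloisField 2 h]
    (Fin m → GaloisField 2 h) × (Fin m → GaloisField 2 h) :=
  (LinearEquiv.funCongrLeft _ _ (finSumFinEquiv.trans (finCongr (two_mul m).symm))).trans
    (LinearEquiv.sumArrowLequivProdArrow _ _ _ _)

lemma symp_eq_dotProduct (u v : V) :
    symp h m u v = (halves h m u).1 ⬝ᵥ (halves h m v).2 + (halves h m u).2 ⬝ᵥ (halves h m v).1 :=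
  Finset.sum_add_distrib

lemma eq_zero_of_symp_eq_zero {b : V} (hb : ∀ u, symp h m b u = 0) : b = 0 := by
  apply (halves h m).injective
  ext i
  · simpa [symp_eq_dotProduct] using hb ((halves h m).symm (0, Pi.single i 1))
  · simpa [symp_eq_dotProduct] using hb ((halves h m).symm (Pi.single i 1, 0))

variable (h m) in
noncomputable def sympForm :
    LinearMap.BilinForm (GaloisField 2 h) (Fin (2 * m) → GaloisField 2 h) :=
  LinearMap.mk₂ _ (symp h m) symp_add_left symp_smul_left symp_add_right symp_smul_right

lemma sympForm_nondegenerate : (sympForm h m).Nondegenerate :=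
  (LinearMap.IsRefl.nondegenerate_iff_separatingLeft fun u v huv => by
      simpa [sympForm, symp_comm] using huv).mpr
    fun _ hb => eq_zero_of_symp_eq_zero hb

lemma existsUnique_symp_eq (φ : Module.Dual F V) : ∃! b : V, ∀ u, symp h m b u = φ u := by
  let e := (sympForm h m).toDual sympForm_nondegenerate
  refine ⟨e.symm φ, fun u => ?_, fun b hb => e.eq_symm_apply.mpr (LinearMap.ext hb)⟩
  exact LinearMap.congr_fun (e.apply_symm_apply φ) u

lemma existsUnique_symp_sq_eq {D : V → F} (hadd : ∀ u v, D (u + v) = D u + D v)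
    (hsmul : ∀ (c : F) u, D (c • u) = c ^ 2 * D u) :
    ∃! b : V, ∀ u, symp h m b u ^ 2 = D u := by
  let sqrt := (frobeniusEquiv F 2).symm
  let φ : Module.Dual F V :=
    { toFun := fun u => sqrt (D u)
      map_add' := fun u v => by rw [hadd, map_add]
      map_smul' := fun c u => by
        rw [hsmul, map_mul, ← frobeniusEquiv_def, RingEquiv.symm_apply_apply]; rfl }
  refine (existsUnique_congr fun b => forall_congr' fun u => ?_).mp (existsUnique_symp_eq φ)
  exact (frobeniusEquiv F 2).eq_symm_apply

lemma IsSymp.symm {A : V ≃ₗ[F] V} (hA : IsSymp h m A) : IsSymp h m A.symm := fun u v => by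
  rw [← hA, A.apply_symm_apply, A.apply_symm_apply]

lemma isSymp_one : IsSymp h m 1 := fun _ _ => rfl

lemma IsSymp.mul {A B : V ≃ₗ[F] V} (hA : IsSymp h m A) (hB : IsSymp h m B) :
    IsSymp h m (A * B) := fun u v => by
  rw [LinearEquiv.mul_apply, LinearEquiv.mul_apply, hA, hB]

lemma existsUnique_th0_symm_apply_eq_th {A : V ≃ₗ[F] V} (hA : IsSymp h m A) :
    ∃! b : V, ∀ u, th0 h m (A.symm u) = th h m b u := by
  have hD := existsUnique_symp_sq_eq (D := fun u => th0 h m (A.symm u) + th0 h m u)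
    (fun u v => by
      simp only [map_add, th0_add, hA.symm u v]
      linear_combination CharTwo.add_self_eq_zero (symp h m u v))
    (fun c u => by simp only [map_smul, th0_smul]; ring)
  refine (existsUnique_congr fun b => forall_congr' fun u => ?_).mp hD
  rw [th, add_comm (th0 h m u), CharTwo.eq_add_iff_add_eq, eq_comm]

variable (h m) in
/-- The vector `b_A`; its value for non-symplectic `A` is arbitrary. -/
noncomputable def translationPart (A : V ≃ₗ[F] V) : V :=
  Classical.epsilon fun b => ∀ u, th0 h m (A.symm u) = th h m b u

lemma th0_symm_apply {A : V ≃ₗ[F] V} (hA : IsSymp h m A) (u : V) :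
    th0 h m (A.symm u) = th h m (translationPart h m A) u :=
  Classical.epsilon_spec (existsUnique_th0_symm_apply_eq_th hA).exists u

lemma eq_translationPart {A : V ≃ₗ[F] V} (hA : IsSymp h m A) {b : V}
    (hb : ∀ u, th0 h m (A.symm u) = th h m b u) : b = translationPart h m A :=
  (existsUnique_th0_symm_apply_eq_th hA).unique hb (th0_symm_apply hA)

lemma th_symm_apply {A : V ≃ₗ[F] V} (hA : IsSymp h m A) (a u : V) :
    th h m a (A.symm u) = th h m (A a + translationPart h m A) u := by
  rw [th, th0_symm_apply hA, th, th, ← hA a, A.apply_symm_apply, symp_add_left, CharTwo.add_sq]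
  ring

lemma translationPart_one : translationPart h m (1 : V ≃ₗ[F] V) = 0 :=
  (eq_translationPart isSymp_one fun u => by
    show th0 h m u = th0 h m u + symp h m 0 u ^ 2
    simp [symp]).symm

lemma translationPart_mul {A B : V ≃ₗ[F] V} (hA : IsSymp h m A) (hB : IsSymp h m B) :
    translationPart h m (A * B) = A (translationPart h m B) + translationPart h m A :=
  (eq_translationPart (hA.mul hB) fun u => by
    rw [← th_symm_apply hA, ← th0_symm_apply hB]; rfl).symm

/-- Fibre by fibre over the first half `x`: all of `F^m` for `x = 0`, half of it otherwise. -/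
lemma two_mul_card_tr_th0_eq_zero :
    2 * Nat.card {a : V // tr h (th0 h m a) = 0} = Nat.card F ^ (2 * m) + Nat.card F ^ m := by
  classical
  have := Fintype.ofFinite F
  have hcard : Nat.card (Fin m → F) = Nat.card F ^ m := by rw [Nat.card_fun, Nat.card_fin]
  have hfib (x : Fin m → F) : 2 * Nat.card {y : Fin m → F // tr h (x ⬝ᵥ y) = 0} =
      Nat.card F ^ m + if x = 0 then Nat.card F ^ m else 0 := by
    rw [← hcard]
    split_ifs with hx
    · subst hx
      simp [tr, two_mul]
    · rw [add_zero]
      exact two_mul_card_trace_dotProduct_eq_zero hx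
  rw [Nat.card_congr (((halves h m).toEquiv.subtypeEquiv (p := fun a => tr h (th0 h m a) = 0)
      (q := fun p => tr h (p.1 ⬝ᵥ p.2) = 0) fun _ => Iff.rfl).trans
      (Equiv.subtypeProdEquivSigmaSubtype fun x y => tr h (x ⬝ᵥ y) = 0)),
    Nat.card_sigma, Finset.mul_sum, Finset.sum_congr rfl fun x _ => hfib x,
    Finset.sum_add_distrib, Finset.sum_ite_eq', Finset.sum_const, Finset.card_univ,
    ← Nat.card_eq_fintype_card, hcard, smul_eq_mul, ← pow_add, ← two_mul]
  simp

lemma card_tr_th0_eq_zero_add_card_tr_th0_eq_one :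
    Nat.card {a : V // tr h (th0 h m a) = 0} + Nat.card {a : V // tr h (th0 h m a) = 1} =
      Nat.card F ^ (2 * m) := by
  rw [Nat.card_congr (Equiv.subtypeEquivRight fun a => zmod_two_eq_one_iff_ne_zero _), ← Nat.card_sum,
    Nat.card_congr (Equiv.sumCompl _), Nat.card_fun, Nat.card_fin]

lemma two_mul_card_tr_th0_eq_one :
    2 * Nat.card {a : V // tr h (th0 h m a) = 1} = Nat.card F ^ (2 * m) - Nat.card F ^ m := by
  have h0 := two_mul_card_tr_th0_eq_zero (h := h) (m := m)
  have h01 := card_tr_th0_eq_zero_add_card_tr_th0_eq_one (h := h) (m := m)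
  omega

lemma tr_th (b u : V) : tr h (th h m b u) = tr h (th0 h m (u + b)) + tr h (th0 h m b) := by
  rw [th, tr_add, tr_sq, th0_add, tr_add, tr_add, symp_comm]
  linear_combination -CharTwo.add_self_eq_zero (tr h (th0 h m b))

lemma card_tr_th_eq_zero (b : V) :
    Nat.card {u : V // tr h (th h m b u) = 0} =
      Nat.card {v : V // tr h (th0 h m v) = tr h (th0 h m b)} :=
  Nat.card_congr <| (Equiv.addRight b).subtypeEquiv fun u => by
    rw [tr_th, CharTwo.add_eq_zero]; rfl

lemma tr_th0_translationPart {A : V ≃ₗ[F] V} (hA : IsSymp h m A) :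
    tr h (th0 h m (translationPart h m A)) = 0 := by
  by_contra hne
  have hone : tr h (th0 h m (translationPart h m A)) = 1 :=
    (zmod_two_eq_one_iff_ne_zero _).mpr hne
  have hcard :
      Nat.card {u : V // tr h (th0 h m u) = 1} = Nat.card {u : V // tr h (th0 h m u) = 0} := by
    rw [← hone, ← card_tr_th_eq_zero]
    exact Nat.card_congr <| A.symm.toEquiv.subtypeEquiv fun u => by
      rw [← th0_symm_apply hA]; rfl
  have h0 := two_mul_card_tr_th0_eq_zero (h := h) (m := m)
  have h01 := card_tr_th0_eq_zero_add_card_tr_th0_eq_one (h := h) (m := m)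
  have hpos : 0 < Nat.card F ^ m := pow_pos Nat.card_pos m
  omega

lemma tr_th0_apply_add_translationPart {A : V ≃ₗ[F] V} (hA : IsSymp h m A) (a : V) :
    tr h (th0 h m (A a + translationPart h m A)) = tr h (th0 h m a) := by
  have ha := th0_symm_apply hA (A a)
  rw [A.symm_apply_apply, th] at ha
  rw [ha, th0_add, tr_add, tr_add, tr_add, tr_sq, tr_th0_translationPart hA, add_zero, symp_comm]

variable (h m) in
noncomputable def sympTransvection (b : V) (t : F) : V ≃ₗ[F] V :=
  LinearEquiv.transvection (f := t • sympForm h m b) (v := b) (by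
    simp [sympForm, symp_self])

lemma sympTransvection_apply (b : V) (t : F) (u : V) :
    sympTransvection h m b t u = u + (t * symp h m b u) • b := rfl

lemma sympTransvection_apply_apply (b : V) (t : F) (u : V) :
    sympTransvection h m b t (sympTransvection h m b t u) = u := by
  rw [sympTransvection_apply, sympTransvection_apply b t u, symp_add_right, symp_smul_right,
    symp_self, mul_zero, add_zero, add_assoc, ← add_smul, CharTwo.add_self_eq_zero, zero_smul,
    add_zero]

lemma sympTransvection_symm_apply (b : V) (t : F) (u : V) :
    (sympTransvection h m b t).symm u = sympTransvection h m b t u :=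
  (LinearEquiv.symm_apply_eq _).mpr (sympTransvection_apply_apply b t u).symm

lemma isSymp_sympTransvection (b : V) (t : F) : IsSymp h m (sympTransvection h m b t) :=
  fun u v => by
    rw [sympTransvection_apply, sympTransvection_apply, symp_add_left, symp_add_right,
      symp_add_right, symp_smul_left, symp_smul_right, symp_smul_right, symp_smul_left,
      symp_self, symp_comm u b]
    linear_combination CharTwo.add_self_eq_zero (t * symp h m b u * symp h m b v)

lemma th0_sympTransvection (b : V) (t : F) (u : V) :
    th0 h m (sympTransvection h m b t u) =
      th0 h m u + (t ^ 2 * th0 h m b + t) * symp h m b u ^ 2 := by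
  rw [sympTransvection_apply, th0_add, th0_smul, symp_smul_right, symp_comm u b]
  ring

lemma translationPart_sympTransvection (b : V) (t : F) {c : F}
    (hc : c ^ 2 = t ^ 2 * th0 h m b + t) :
    translationPart h m (sympTransvection h m b t) = c • b :=
  (eq_translationPart (isSymp_sympTransvection b t) fun u => by
    rw [sympTransvection_symm_apply, th0_sympTransvection, th, symp_smul_left, mul_pow, hc]).symm

/-- The witness is the transvection along `b = a' - a` with parameter `w⁻¹`, where `w ≠ 0` solves
`w² + w = ϑ_0(b) + ⟨b, a⟩²`; the right side has trace `Tr ϑ_0(a') - Tr ϑ_0(a) = 0`. -/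
lemma exists_isSymp_apply_add_translationPart_eq {a a' : V}
    (htr : tr h (th0 h m a) = tr h (th0 h m a')) :
    ∃ A, IsSymp h m A ∧ A a + translationPart h m A = a' := by
  obtain ⟨b, rfl⟩ : ∃ b, a' = a + b := ⟨a' - a, by abel⟩
  have htrα : tr h (th0 h m b + symp h m b a ^ 2) = 0 := by
    rw [th0_add, tr_add, tr_add, add_assoc, left_eq_add] at htr
    rw [tr_add, tr_sq, symp_comm, htr]
  obtain ⟨w, hw0, hw⟩ : ∃ w : F, w ≠ 0 ∧ w ^ 2 + w = th0 h m b + symp h m b a ^ 2 := by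
    obtain ⟨w, hw⟩ := exists_sq_add_self_eq_of_trace_eq_zero htrα
    by_cases hw0 : w = 0
    · refine ⟨1, one_ne_zero, ?_⟩
      rw [← hw, hw0]
      simp [CharTwo.add_self_eq_zero]
    · exact ⟨w, hw0, hw⟩
  have hc : (1 + w⁻¹ * symp h m b a) ^ 2 = w⁻¹ ^ 2 * th0 h m b + w⁻¹ := by
    linear_combination w⁻¹ ^ 2 * hw + (-(w⁻¹ * w + 1) - w⁻¹) * inv_mul_cancel₀ hw0 +
      (w⁻¹ * symp h m b a + w⁻¹ ^ 2 * symp h m b a ^ 2 - w⁻¹) * CharTwo.two_eq_zero (R := F)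
  refine ⟨sympTransvection h m b w⁻¹, isSymp_sympTransvection b w⁻¹, ?_⟩
  rw [translationPart_sympTransvection b w⁻¹ hc, sympTransvection_apply, add_assoc, ← add_smul,
    show w⁻¹ * symp h m b a + (1 + w⁻¹ * symp h m b a) = 1 by
      linear_combination (w⁻¹ * symp h m b a) * CharTwo.two_eq_zero (R := F),
    one_smul]

end Symplectic

theorem stmt_4_general (h m : ℕ) (hh : 1 ≤ h) :
    (∀ A : (Fin (2*m) → GaloisField 2 h) ≃ₗ[GaloisField 2 h] (Fin (2*m) → GaloisField 2 h),
      IsSymp h m A →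
      ∃! b : Fin (2*m) → GaloisField 2 h, ∀ u, th0 h m (A.symm u) = th h m b u)
    ∧ ∃ β : ((Fin (2*m) → GaloisField 2 h) ≃ₗ[GaloisField 2 h] (Fin (2*m) → GaloisField 2 h))
        → (Fin (2*m) → GaloisField 2 h),
      -- `β A` is the vector `b_A`
      (∀ A, IsSymp h m A → ∀ u, th0 h m (A.symm u) = th h m (β A) u)
      -- and then `ϑ_a(A⁻¹ u) = ϑ_{Aa + b_A}(u)`
      ∧ (∀ A, IsSymp h m A → ∀ a u, th h m a (A.symm u) = th h m (A a + β A) u)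
      -- `σ_A : a ↦ Aa + b_A` is a permutation of `V`
      ∧ (∀ A, IsSymp h m A → Function.Bijective (fun a => A a + β A))
      -- `A ↦ σ_A` is multiplicative on symplectic maps
      ∧ (∀ A B, IsSymp h m A → IsSymp h m B →
          ∀ a, (A * B) a + β (A * B) = A (B a + β B) + β A)
      -- and injective
      ∧ (∀ A B, IsSymp h m A → IsSymp h m B →
          (∀ a, A a + β A = B a + β B) → A = B)
      -- the image meets the translations only in the identity permutation
      ∧ (∀ A, IsSymp h m A → (∃ c, ∀ a, A a + β A = a + c) → ∀ a, A a + β A = a)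
      -- the two trace-level sets are invariant under every `σ_A`
      ∧ (∀ A, IsSymp h m A → ∀ a, tr h (th0 h m (A a + β A)) = tr h (th0 h m a))
      -- and the image acts transitively on each of them
      ∧ (∀ a a' : Fin (2*m) → GaloisField 2 h, tr h (th0 h m a) = tr h (th0 h m a') →
          ∃ A, IsSymp h m A ∧ A a + β A = a')
      -- orbit sizes
      ∧ 2 * Nat.card {a : Fin (2*m) → GaloisField 2 h // tr h (th0 h m a) = 0}
          = (2^h)^(2*m) + (2^h)^m
      ∧ 2 * Nat.card {a : Fin (2*m) → GaloisField 2 h // tr h (th0 h m a) = 1}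
          = (2^h)^(2*m) - (2^h)^m := by
  have hq : Nat.card (GaloisField 2 h) = 2 ^ h := GaloisField.card 2 h (by omega)
  refine ⟨fun A hA => existsUnique_th0_symm_apply_eq_th hA, translationPart h m,
    fun A hA => th0_symm_apply hA, fun A hA => th_symm_apply hA,
    fun A _ => (Equiv.addRight _).bijective.comp A.bijective,
    fun A B hA hB a => by rw [translationPart_mul hA hB, LinearEquiv.mul_apply, map_add, add_assoc],
    fun A B _ _ hAB => ?_, fun A _ ⟨c, hc⟩ => ?_,
    fun A hA => tr_th0_apply_add_translationPart hA,
    fun a a' => exists_isSymp_apply_add_translationPart_eq,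
    hq ▸ two_mul_card_tr_th0_eq_zero, hq ▸ two_mul_card_tr_th0_eq_one⟩
  · have h0 : translationPart h m A = translationPart h m B := by simpa using hAB 0
    exact LinearEquiv.ext fun a => by simpa [h0] using hAB a
  · have hA : A = 1 := by
      have h0 : translationPart h m A = c := by simpa using hc 0
      exact LinearEquiv.ext fun a => by simpa [h0] using hc a
    subst hA
    simp [translationPart_one]

/-- For every symplectic `A` there is a unique `b_A` with `ϑ_0 ∘ A⁻¹ = ϑ_{b_A}`, and then
`ϑ_a ∘ A⁻¹ = ϑ_{Aa + b_A}`; the map `A ↦ (a ↦ Aa + b_A)` is an injective group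
homomorphism from the symplectic group into the permutations of `V`, meeting the
translations only in the identity, and its image has exactly the two orbits
`{Tr(ϑ_0(a)) = 0}` and `{Tr(ϑ_0(a)) = 1}`, of sizes `(q^{2m}+q^m)/2` and `(q^{2m}-q^m)/2`. -/
theorem stmt_4 (h m : ℕ) (hh : 1 ≤ h) (hm : 1 ≤ m) :
    (∀ A : (Fin (2*m) → GaloisField 2 h) ≃ₗ[GaloisField 2 h] (Fin (2*m) → GaloisField 2 h),
      IsSymp h m A →
      ∃! b : Fin (2*m) → GaloisField 2 h, ∀ u, th0 h m (A.symm u) = th h m b u)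
    ∧ ∃ β : ((Fin (2*m) → GaloisField 2 h) ≃ₗ[GaloisField 2 h] (Fin (2*m) → GaloisField 2 h))
        → (Fin (2*m) → GaloisField 2 h),
      -- `β A` is the vector `b_A`
      (∀ A, IsSymp h m A → ∀ u, th0 h m (A.symm u) = th h m (β A) u)
      -- and then `ϑ_a(A⁻¹ u) = ϑ_{Aa + b_A}(u)`
      ∧ (∀ A, IsSymp h m A → ∀ a u, th h m a (A.symm u) = th h m (A a + β A) u)
      -- `σ_A : a ↦ Aa + b_A` is a permutation of `V`
      ∧ (∀ A, IsSymp h m A → Function.Bijective (fun a => A a + β A))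
      -- `A ↦ σ_A` is multiplicative on symplectic maps
      ∧ (∀ A B, IsSymp h m A → IsSymp h m B →
          ∀ a, (A * B) a + β (A * B) = A (B a + β B) + β A)
      -- and injective
      ∧ (∀ A B, IsSymp h m A → IsSymp h m B →
          (∀ a, A a + β A = B a + β B) → A = B)
      -- the image meets the translations only in the identity permutation
      ∧ (∀ A, IsSymp h m A → (∃ c, ∀ a, A a + β A = a + c) → ∀ a, A a + β A = a)
      -- the two trace-level sets are invariant under every `σ_A`
      ∧ (∀ A, IsSymp h m A → ∀ a, tr h (th0 h m (A a + β A)) = tr h (th0 h m a))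
      -- and the image acts transitively on each of them
      ∧ (∀ a a' : Fin (2*m) → GaloisField 2 h, tr h (th0 h m a) = tr h (th0 h m a') →
          ∃ A, IsSymp h m A ∧ A a + β A = a')
      -- orbit sizes
      ∧ 2 * Nat.card {a : Fin (2*m) → GaloisField 2 h // tr h (th0 h m a) = 0}
          = (2^h)^(2*m) + (2^h)^m
      ∧ 2 * Nat.card {a : Fin (2*m) → GaloisField 2 h // tr h (th0 h m a) = 1}
          = (2^h)^(2*m) - (2^h)^m :=
  stmt_4_general h m hh
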